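/- For the scalar density evolution of a regular degree-2 product code with row degree n, defined by x^{(0)} = 1 and x^{(ℓ+1)} = Ψ_{≥t}(p n x^{(ℓ)}), if p n < t / e (equivalently if Ψ_{≥t}(pn·x) < x for all x ∈ (0,1]), then x^{(ℓ)} → 0 as ℓ → ∞. -/

import Mathlib

/-!
Let `f` be continuous with `0 ≤ f y < y` on `(0, a]`; by continuity also `f 0 ≤ 0`. An orbit
of `f` started in `[0, a]` is then nonincreasing and bounded below, so it converges to some
`L ∈ [0, a]`; by continuity `L` is a fixed point of `f`, which forces `L = 0`. For
`f y = Ψ_{≥t}(p n y)` the lower bound `0 ≤ Ψ_{≥t}` holds because `∑_{k<t} λ^k/k!` is a partial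
sum of the series of `e^λ`.
-/

open Real Finset Filter Topology Set

noncomputable def poissonTail (t : ℕ) (lam : ℝ) : ℝ :=
  1 - exp (-lam) * ∑ k ∈ Finset.range t, lam ^ k / (Nat.factorial k)

lemma continuous_poissonTail (t : ℕ) : Continuous (poissonTail t) := by
  unfold poissonTail
  fun_prop

lemma poissonTail_nonneg (t : ℕ) {lam : ℝ} (hlam : 0 ≤ lam) : 0 ≤ poissonTail t lam := by
  rw [poissonTail, sub_nonneg]
  calc exp (-lam) * ∑ k ∈ Finset.range t, lam ^ k / (Nat.factorial k)
      ≤ exp (-lam) * exp lam := by gcongr; exact sum_le_exp_of_nonneg hlam t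
    _ = 1 := by rw [← exp_add, neg_add_cancel, exp_zero]

lemma apply_zero_le_zero_of_lt_self_on_Ioc {f : ℝ → ℝ} (hf : Continuous f) {a : ℝ} (ha : 0 < a)
    (hlt : ∀ y ∈ Ioc 0 a, f y < y) : f 0 ≤ 0 := by
  have hsub : closure (Ioc 0 a) ⊆ {y | f y ≤ y} :=
    closure_minimal (fun y hy => (hlt y hy).le) (isClosed_le hf continuous_id)
  rw [closure_Ioc ha.ne] at hsub
  exact hsub ⟨le_rfl, ha.le⟩

section Orbit

variable {f : ℝ → ℝ} {a : ℝ} {x : ℕ → ℝ}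

lemma orbit_mem_Icc_and_antitone (hnonneg : ∀ y ∈ Icc 0 a, 0 ≤ f y)
    (hlt : ∀ y ∈ Ioc 0 a, f y < y) (hf0 : f 0 ≤ 0) (hx0 : x 0 ∈ Icc 0 a)
    (hrec : ∀ ℓ, x (ℓ + 1) = f (x ℓ)) : (∀ ℓ, x ℓ ∈ Icc 0 a) ∧ Antitone x := by
  have hstep : ∀ y ∈ Icc 0 a, f y ∈ Icc 0 y := fun y hy => by
    refine ⟨hnonneg y hy, ?_⟩
    rcases hy.1.eq_or_lt with rfl | hpos
    · exact hf0
    · exact (hlt y ⟨hpos, hy.2⟩).le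
  have hmem : ∀ ℓ, x ℓ ∈ Icc 0 a := by
    intro ℓ
    induction ℓ with
    | zero => exact hx0
    | succ ℓ ih =>
      rw [hrec]
      exact ⟨(hstep _ ih).1, (hstep _ ih).2.trans ih.2⟩
  refine ⟨hmem, antitone_nat_of_succ_le fun ℓ => ?_⟩
  rw [hrec]
  exact (hstep _ (hmem ℓ)).2

theorem tendsto_zero_of_orbit_of_lt_self (hf : Continuous f)
    (hnonneg : ∀ y ∈ Icc 0 a, 0 ≤ f y) (hlt : ∀ y ∈ Ioc 0 a, f y < y) (hf0 : f 0 ≤ 0)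
    (hx0 : x 0 ∈ Icc 0 a) (hrec : ∀ ℓ, x (ℓ + 1) = f (x ℓ)) : Tendsto x atTop (𝓝 0) := by
  obtain ⟨hmem, hanti⟩ := orbit_mem_Icc_and_antitone hnonneg hlt hf0 hx0 hrec
  have hbdd : BddBelow (range x) := ⟨0, by rintro _ ⟨ℓ, rfl⟩; exact (hmem ℓ).1⟩
  have hlim : Tendsto x atTop (𝓝 (⨅ ℓ, x ℓ)) := tendsto_atTop_ciInf hanti hbdd
  set L := ⨅ ℓ, x ℓ
  have hL : L ∈ Icc 0 a := isClosed_Icc.mem_of_tendsto hlim (Eventually.of_forall hmem)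
  have hfix : f L = L := by
    refine tendsto_nhds_unique ?_ (hlim.comp (tendsto_add_atTop_nat 1))
    simpa only [Function.comp_def, hrec] using (hf.tendsto L).comp hlim
  obtain hzero | hpos := hL.1.eq_or_lt
  · rwa [hzero]
  · exact absurd hfix (hlt L ⟨hpos, hL.2⟩).ne

end Orbit

theorem scalar_DE_to_zero_general (t : ℕ) (p : ℝ) (hp : 0 ≤ p) (n : ℕ)
    (Ψ : ℝ → ℝ)
    (hΨ : Ψ = fun lam => 1 - Real.exp (-lam) * ∑ k ∈ Finset.range t, lam ^ k / (Nat.factorial k))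
    (x : ℕ → ℝ) (hx0 : x 0 = 1)
    (hrec : ∀ ℓ, x (ℓ + 1) = Ψ (p * n * x ℓ))
    (hcontract : ∀ y : ℝ, y ∈ Set.Ioc (0:ℝ) 1 → Ψ (p * n * y) < y) :
    Tendsto x atTop (nhds 0) := by
  obtain rfl : Ψ = poissonTail t := hΨ
  have hf : Continuous fun y => poissonTail t (p * n * y) :=
    (continuous_poissonTail t).comp (continuous_const.mul continuous_id)
  refine tendsto_zero_of_orbit_of_lt_self hf (fun y hy => poissonTail_nonneg t ?_) hcontract
    (apply_zero_le_zero_of_lt_self_on_Ioc hf one_pos hcontract) (by simp [hx0]) hrec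
  exact mul_nonneg (by positivity) hy.1

/-- Scalar density evolution of a regular degree-2 product code: with
`Ψ_{≥t}(λ) = 1 - e^{-λ} ∑_{k<t} λ^k/k!`, `x⁰ = 1`, `x^{ℓ+1} = Ψ_{≥t}(p n x^ℓ)`,
the strict contraction condition `Ψ_{≥t}(p n y) < y` on `(0,1]` forces `x^ℓ → 0`. -/
theorem scalar_DE_to_zero (t : ℕ) (ht : 1 ≤ t) (p : ℝ) (hp : 0 ≤ p) (n : ℕ)
    (Ψ : ℝ → ℝ)
    (hΨ : Ψ = fun lam => 1 - Real.exp (-lam) * ∑ k ∈ Finset.range t, lam ^ k / (Nat.factorial k))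
    (x : ℕ → ℝ) (hx0 : x 0 = 1)
    (hrec : ∀ ℓ, x (ℓ + 1) = Ψ (p * n * x ℓ))
    (hcontract : ∀ y : ℝ, y ∈ Set.Ioc (0:ℝ) 1 → Ψ (p * n * y) < y) :
    Tendsto x atTop (nhds 0) :=
  scalar_DE_to_zero_general t p hp n Ψ hΨ x hx0 hrec hcontract
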